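/- arXiv:2504.07035 — 5 statements merged into one kernel-verified Lean document; each statement's English description precedes it below -/
import Mathlib

section
/- Let γ : ℝ → ℂ² be a unit-speed Legendre curve in S³. Then γ satisfies the second-order differential equation γ''(t) = −γ(t) + κ(t)·(i·γ'(t)) for all t, where κ(t) = ⟨γ''(t), i·γ'(t)⟩. -/
open scoped InnerProductSpace

/-- `ℂ²` with its standard Hermitian inner product. -/
abbrev C2 := EuclideanSpace ℂ (Fin 2)

/-- A unit-speed Legendre curve `γ` in `S³ ⊂ ℂ²` satisfies the
second-order ODE `γ'' = -γ + κ • (i • γ')`, where `κ t = re ⟪γ'' t, i • γ' t⟫_ℂ`. -/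
theorem stmt_1 (γ : ℝ → C2) (hγ : ContDiff ℝ (⊤ : ℕ∞) γ)
    (hunit : ∀ t, ‖γ t‖ = 1) (hspeed : ∀ t, ‖deriv γ t‖ = 1)
    (hleg : ∀ t, (⟪deriv γ t, Complex.I • γ t⟫_ℂ).re = 0) (t : ℝ) :
    deriv (deriv γ) t =
      -γ t + (⟪deriv (deriv γ) t, Complex.I • deriv γ t⟫_ℂ).re •
        (Complex.I • deriv γ t) := by
  have hgi : ContDiff ℝ ((⊤ : ℕ∞) : WithTop ℕ∞) γ := hγ.of_le (by simp)
  have hγ' : ContDiff ℝ ((⊤ : ℕ∞) : WithTop ℕ∞) (deriv γ) := (contDiff_infty_iff_deriv.1 hgi).2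
  have h1le : (1 : WithTop ℕ∞) ≤ ((⊤ : ℕ∞) : WithTop ℕ∞) := by exact_mod_cast le_top
  have hd1 : ∀ s : ℝ, HasDerivAt γ (deriv γ s) s := fun s =>
    ((hgi.differentiable (by simp)) s).hasDerivAt
  have hd2 : ∀ s : ℝ, HasDerivAt (deriv γ) (deriv (deriv γ) s) s := fun s =>
    ((hγ'.differentiable (by simp)) s).hasDerivAt
  -- basic complex inner products
  have A : ∀ s, ⟪γ s, γ s⟫_ℂ = 1 := by
    intro s
    rw [inner_self_eq_norm_sq_to_K, hunit s]; norm_num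
  have B : ∀ s, ⟪deriv γ s, deriv γ s⟫_ℂ = 1 := by
    intro s
    rw [inner_self_eq_norm_sq_to_K, hspeed s]; norm_num
  -- imaginary part of ⟪γ, γ'⟫ is 0, from the Legendre condition
  have him : ∀ s, (⟪γ s, deriv γ s⟫_ℂ).im = 0 := by
    intro s
    have h1 := hleg s
    rw [inner_smul_right] at h1
    set z := ⟪deriv γ s, γ s⟫_ℂ with hz
    have h2 : z.im = 0 := by
      rw [Complex.mul_re] at h1; simpa using h1
    rw [← inner_conj_symm (γ s) (deriv γ s), ← hz]
    simp [h2]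
  -- real part of ⟪γ, γ'⟫ is 0 from differentiating ‖γ‖² = 1
  have hre : ∀ s, (⟪γ s, deriv γ s⟫_ℂ).re = 0 := by
    intro s
    have h0 : HasDerivAt (fun u => ⟪γ u, γ u⟫_ℂ)
        (⟪γ s, deriv γ s⟫_ℂ + ⟪deriv γ s, γ s⟫_ℂ) s :=
      HasDerivAt.inner ℂ (hd1 s) (hd1 s)
    have hc : HasDerivAt (fun _ : ℝ => (1 : ℂ)) 0 s := hasDerivAt_const s 1
    have : (fun u => ⟪γ u, γ u⟫_ℂ) = fun _ : ℝ => (1 : ℂ) := funext A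
    rw [this] at h0
    have h1 := h0.unique hc
    rw [(inner_conj_symm (deriv γ s) (γ s)).symm] at h1
    have h4 := congrArg Complex.re h1
    simp only [Complex.add_re, Complex.conj_re, Complex.zero_re] at h4
    linarith
  have C : ∀ s, ⟪γ s, deriv γ s⟫_ℂ = 0 := fun s =>
    Complex.ext (by simpa using hre s) (by simpa using him s)
  -- ⟪γ, γ''⟫ = -1 from differentiating C
  have D : ⟪γ t, deriv (deriv γ) t⟫_ℂ = -1 := by
    have h0 : HasDerivAt (fun u => ⟪γ u, deriv γ u⟫_ℂ)
        (⟪γ t, deriv (deriv γ) t⟫_ℂ + ⟪deriv γ t, deriv γ t⟫_ℂ) t :=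
      HasDerivAt.inner ℂ (hd1 t) (hd2 t)
    have hc : HasDerivAt (fun _ : ℝ => (0 : ℂ)) 0 t := hasDerivAt_const t 0
    have he : (fun u => ⟪γ u, deriv γ u⟫_ℂ) = fun _ : ℝ => (0 : ℂ) := funext C
    rw [he] at h0
    have := h0.unique hc
    rw [B t] at this
    linear_combination this
  -- real part of ⟪γ', γ''⟫ = 0 from differentiating ‖γ'‖² = 1
  have E : (⟪deriv γ t, deriv (deriv γ) t⟫_ℂ).re = 0 := by
    have h0 : HasDerivAt (fun u => ⟪deriv γ u, deriv γ u⟫_ℂ)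
        (⟪deriv γ t, deriv (deriv γ) t⟫_ℂ + ⟪deriv (deriv γ) t, deriv γ t⟫_ℂ) t :=
      HasDerivAt.inner ℂ (hd2 t) (hd2 t)
    have hc : HasDerivAt (fun _ : ℝ => (1 : ℂ)) 0 t := hasDerivAt_const t 1
    have he : (fun u => ⟪deriv γ u, deriv γ u⟫_ℂ) = fun _ : ℝ => (1 : ℂ) := funext B
    rw [he] at h0
    have h1 := h0.unique hc
    rw [(inner_conj_symm (deriv (deriv γ) t) (deriv γ t)).symm] at h1
    have h4 := congrArg Complex.re h1
    simp only [Complex.add_re, Complex.conj_re, Complex.zero_re] at h4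
    linarith
  set κ : ℝ := (⟪deriv (deriv γ) t, Complex.I • deriv γ t⟫_ℂ).re with hκ
  have F : ⟪deriv γ t, deriv (deriv γ) t⟫_ℂ = Complex.I * κ := by
    have hκ' : κ = (⟪deriv γ t, deriv (deriv γ) t⟫_ℂ).im := by
      rw [hκ, inner_smul_right, ← inner_conj_symm (deriv (deriv γ) t) (deriv γ t)]
      set z := ⟪deriv γ t, deriv (deriv γ) t⟫_ℂ with hz
      rw [Complex.mul_re]
      simp
    set z := ⟪deriv γ t, deriv (deriv γ) t⟫_ℂ with hz
    apply Complex.ext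
    · rw [Complex.mul_re]; simp [E]
    · rw [Complex.mul_im]; simp [hκ']
  -- orthonormal basis {γ t, γ' t}
  have C' : ⟪deriv γ t, γ t⟫_ℂ = 0 := by
    rw [← inner_conj_symm (deriv γ t) (γ t)]
    simp [C t]
  have horth : Orthonormal ℂ ![γ t, deriv γ t] := by
    rw [orthonormal_iff_ite]
    intro i j
    fin_cases i <;> fin_cases j <;> simp [A t, B t, C t, C', hunit t, hspeed t]
  have hcard : Fintype.card (Fin 2) = Module.finrank ℂ C2 := by
    simp [finrank_euclideanSpace_fin]
  let bas := basisOfOrthonormalOfCardEqFinrank horth hcard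
  have hbas : ⇑bas = ![γ t, deriv γ t] :=
    coe_basisOfOrthonormalOfCardEqFinrank horth hcard
  have horth' : Orthonormal ℂ ⇑bas := by rw [hbas]; exact horth
  let ob : OrthonormalBasis (Fin 2) ℂ C2 := bas.toOrthonormalBasis horth'
  have hob : ∀ i, ob i = ![γ t, deriv γ t] i := by
    intro i
    simp only [ob, Module.Basis.coe_toOrthonormalBasis, hbas]
  have hrepr := ob.sum_repr' (deriv (deriv γ) t)
  rw [Fin.sum_univ_two, hob 0, hob 1] at hrepr
  simp only [Matrix.cons_val_zero, Matrix.cons_val_one, Matrix.head_cons] at hrepr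
  rw [D, F] at hrepr
  rw [← hrepr, show ((κ : ℂ)) = algebraMap ℝ ℂ κ from rfl]
  module
end

section
/- Let κ : ℝ → ℝ be continuous and let γ : ℝ → ℂ² be a C² curve satisfying γ''(t) = −γ(t) + κ(t)·(i·γ'(t)) for all t. Suppose that at some t₀ one has ‖γ(t₀)‖ = 1, ‖γ'(t₀)‖ = 1, ⟨γ(t₀), γ'(t₀)⟩ = 0 and ⟨γ'(t₀), i·γ(t₀)⟩ = 0. Then for ALL t ∈ ℝ one has ‖γ(t)‖ = 1, ‖γ'(t)‖ = 1, ⟨γ(t), γ'(t)⟩ = 0 and ⟨γ'(t), i·γ(t)⟩ = 0; that is, γ is a unit-speed Legendre curve in S³. -/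
open scoped InnerProductSpace

/-- Grönwall-type lemma: a real function with `|f'| ≤ 2|f|` vanishing at a point vanishes
everywhere. -/
lemma gronwall_zero_aux {f f' : ℝ → ℝ} (hd : ∀ t, HasDerivAt f (f' t) t)
    (hb : ∀ t, |f' t| ≤ 2 * |f t|) {t₀ : ℝ} (h0 : f t₀ = 0) : ∀ t, f t = 0 := by
  have fwd : ∀ (g g' : ℝ → ℝ), (∀ t, HasDerivAt g (g' t) t) → (∀ t, |g' t| ≤ 2 * |g t|) →
      ∀ s : ℝ, g s = 0 → ∀ t, s ≤ t → g t = 0 := by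
    intro g g' hdg hbg s hs t hst
    have key := norm_le_gronwallBound_of_norm_deriv_right_le (f := g) (f' := g')
      (δ := 0) (K := 2) (ε := 0) (a := s) (b := t)
      (fun x _ => (hdg x).continuousAt.continuousWithinAt)
      (fun x _ => (hdg x).hasDerivWithinAt)
      (by simp [hs]) (fun x _ => by simpa using hbg x) t ⟨hst, le_rfl⟩
    rw [gronwallBound_ε0] at key
    simp only [Real.norm_eq_abs, zero_mul] at key
    exact abs_eq_zero.mp (le_antisymm key (abs_nonneg _))
  intro t
  rcases le_total t₀ t with h | h
  · exact fwd f f' hd hb t₀ h0 t h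
  · -- backward: reflect time
    have hrefl : ∀ u : ℝ, HasDerivAt (fun s : ℝ => 2 * t₀ - s) (-1) u := by
      intro u
      simpa using (hasDerivAt_id u).const_sub (2 * t₀)
    have hdg : ∀ u, HasDerivAt (fun s => f (2 * t₀ - s)) (f' (2 * t₀ - u) * (-1)) u := by
      intro u
      exact (hd (2 * t₀ - u)).comp u (hrefl u)
    have hbg : ∀ u, |f' (2 * t₀ - u) * (-1)| ≤ 2 * |f (2 * t₀ - u)| := by
      intro u
      simpa [abs_mul] using hb (2 * t₀ - u)
    have h0' : f (2 * t₀ - t₀) = 0 := by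
      have : 2 * t₀ - t₀ = t₀ := by ring
      rw [this]; exact h0
    have := fwd (fun s => f (2 * t₀ - s)) (fun u => f' (2 * t₀ - u) * (-1)) hdg hbg t₀ h0'
      (2 * t₀ - t) (by linarith)
    simpa [show 2 * t₀ - (2 * t₀ - t) = t by ring] using this
/-- The conserved-quantities system: if `a' = 2c`, `b' = -2c`, `c' = b - a - κd`, `d' = κc`
and at `t₀` we have `a = b = 1`, `c = d = 0`, then these values persist for all time. -/
lemma legendre_system_aux (κ : ℝ → ℝ) (a b c d : ℝ → ℝ)
    (ha : ∀ t, HasDerivAt a (2 * c t) t)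
    (hb : ∀ t, HasDerivAt b (-2 * c t) t)
    (hc : ∀ t, HasDerivAt c (b t - a t - κ t * d t) t)
    (hd : ∀ t, HasDerivAt d (κ t * c t) t)
    (t₀ : ℝ) (ha0 : a t₀ = 1) (hb0 : b t₀ = 1) (hc0 : c t₀ = 0) (hd0 : d t₀ = 0) :
    ∀ t, a t = 1 ∧ b t = 1 ∧ c t = 0 ∧ d t = 0 := by
  have hF : ∀ t, HasDerivAt
      (fun s => (a s - 1) ^ 2 + (b s - 1) ^ 2 + c s ^ 2 + d s ^ 2)
      (2 * c t * (a t - b t)) t := by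
    intro t
    have := ((((ha t).sub_const 1).pow 2).add (((hb t).sub_const 1).pow 2)).add
      ((hc t).pow 2) |>.add ((hd t).pow 2)
    exact this.congr_deriv (by norm_num; ring)
  have hbound : ∀ t, |2 * c t * (a t - b t)| ≤
      2 * |(a t - 1) ^ 2 + (b t - 1) ^ 2 + c t ^ 2 + d t ^ 2| := by
    intro t
    have hFnn : (0:ℝ) ≤ (a t - 1) ^ 2 + (b t - 1) ^ 2 + c t ^ 2 + d t ^ 2 := by positivity
    rw [abs_of_nonneg hFnn, abs_le]
    constructor <;>
      nlinarith [sq_nonneg (c t - (a t - b t)), sq_nonneg (c t + (a t - b t)),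
        sq_nonneg ((a t - 1) + (b t - 1)), sq_nonneg (d t)]
  have hF0 : (a t₀ - 1) ^ 2 + (b t₀ - 1) ^ 2 + c t₀ ^ 2 + d t₀ ^ 2 = 0 := by
    rw [ha0, hb0, hc0, hd0]; norm_num
  have hzero := gronwall_zero_aux hF hbound hF0
  intro t
  have hFt := hzero t
  refine ⟨?_, ?_, ?_, ?_⟩ <;>
    nlinarith [sq_nonneg (a t - 1), sq_nonneg (b t - 1), sq_nonneg (c t), sq_nonneg (d t)]

/-- Let `κ : ℝ → ℝ` be continuous and let `γ : ℝ → ℂ²` be a `C²` curve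
satisfying `γ'' = -γ + κ • (i • γ')`.  If at some `t₀` we have `‖γ t₀‖ = 1`,
`‖γ' t₀‖ = 1`, `⟨γ t₀, γ' t₀⟩ = 0` and `⟨γ' t₀, i • γ t₀⟩ = 0` (real inner products),
then these four conditions hold for all `t`, i.e. `γ` is a unit-speed Legendre curve
in `S³`. -/
theorem stmt_2 (κ : ℝ → ℝ) (hκ : Continuous κ) (γ : ℝ → C2) (hγ : ContDiff ℝ 2 γ)
    (hode : ∀ t, deriv (deriv γ) t = -γ t + κ t • (Complex.I • deriv γ t))
    (t₀ : ℝ) (h1 : ‖γ t₀‖ = 1) (h2 : ‖deriv γ t₀‖ = 1)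
    (h3 : (⟪γ t₀, deriv γ t₀⟫_ℂ).re = 0)
    (h4 : (⟪deriv γ t₀, Complex.I • γ t₀⟫_ℂ).re = 0) :
    ∀ t, ‖γ t‖ = 1 ∧ ‖deriv γ t‖ = 1 ∧
      (⟪γ t, deriv γ t⟫_ℂ).re = 0 ∧
      (⟪deriv γ t, Complex.I • γ t⟫_ℂ).re = 0 := by
  have hdγ : ∀ t, HasDerivAt γ (deriv γ t) t :=
    fun t => (hγ.differentiable (by norm_num) t).hasDerivAt
  have hdiff2 : Differentiable ℝ (deriv γ) :=
    ((contDiff_succ_iff_deriv.mp (by exact_mod_cast hγ : ContDiff ℝ (1 + 1) γ)).2.2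
      ).differentiable (by norm_num)
  have hdg : ∀ t, HasDerivAt (deriv γ) (-γ t + κ t • (Complex.I • deriv γ t)) t := by
    intro t
    have := (hdiff2 t).hasDerivAt
    rwa [hode t] at this
  -- helper identities for the real inner product
  have Iswap : ∀ x y : C2, ⟪x, Complex.I • y⟫_ℝ = -⟪y, Complex.I • x⟫_ℝ := by
    intro x y
    show (⟪x, Complex.I • y⟫_ℂ).re = -(⟪y, Complex.I • x⟫_ℂ).re
    rw [inner_smul_right, inner_smul_right]
    simp
    rw [← inner_conj_symm x y, Complex.conj_im, neg_neg]
  have III : ∀ x y : C2, ⟪Complex.I • x, Complex.I • y⟫_ℝ = ⟪x, y⟫_ℝ := by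
    intro x y
    show (⟪Complex.I • x, Complex.I • y⟫_ℂ).re = (⟪x, y⟫_ℂ).re
    simp [real_inner_eq_re_inner ℂ, inner_smul_right, inner_smul_left, Complex.conj_I]
  have Iself : ∀ x : C2, ⟪x, Complex.I • x⟫_ℝ = 0 := by
    intro x
    show (⟪x, Complex.I • x⟫_ℂ).re = 0
    simp [real_inner_eq_re_inner ℂ, inner_smul_right]
    rw [← Complex.ofReal_pow, Complex.ofReal_im]
  -- derivatives of the four quantities
  have ha : ∀ t, HasDerivAt (fun s => ⟪γ s, γ s⟫_ℝ) (2 * ⟪γ t, deriv γ t⟫_ℝ) t := by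
    intro t
    have := (hdγ t).inner ℝ (hdγ t)
    refine this.congr_deriv ?_
    rw [real_inner_comm (deriv γ t) (γ t)]
    ring
  have hb : ∀ t, HasDerivAt (fun s => ⟪deriv γ s, deriv γ s⟫_ℝ)
      (-2 * ⟪γ t, deriv γ t⟫_ℝ) t := by
    intro t
    have := (hdg t).inner ℝ (hdg t)
    refine this.congr_deriv ?_
    rw [inner_add_right, inner_add_left, inner_neg_right, inner_neg_left,
      real_inner_smul_right, real_inner_smul_left, Iself,
      real_inner_comm (γ t) (deriv γ t), show ⟪Complex.I • deriv γ t, deriv γ t⟫_ℝ = 0 by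
        rw [real_inner_comm]; exact Iself (deriv γ t)]
    ring
  have hc : ∀ t, HasDerivAt (fun s => ⟪γ s, deriv γ s⟫_ℝ)
      (⟪deriv γ t, deriv γ t⟫_ℝ - ⟪γ t, γ t⟫_ℝ - κ t * ⟪deriv γ t, Complex.I • γ t⟫_ℝ) t := by
    intro t
    have := (hdγ t).inner ℝ (hdg t)
    refine this.congr_deriv ?_
    rw [inner_add_right, inner_neg_right, real_inner_smul_right, Iswap]
    ring
  have hd : ∀ t, HasDerivAt (fun s => ⟪deriv γ s, Complex.I • γ s⟫_ℝ)
      (κ t * ⟪γ t, deriv γ t⟫_ℝ) t := by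
    intro t
    have hIγ : HasDerivAt (fun s => Complex.I • γ s) (Complex.I • deriv γ t) t :=
      (hdγ t).const_smul Complex.I
    have := (hdg t).inner ℝ hIγ
    refine this.congr_deriv ?_
    rw [inner_add_left, inner_neg_left, real_inner_smul_left, III,
      Iself, Iself, real_inner_comm (deriv γ t) (γ t)]
    ring
  -- initial conditions
  have ha0 : ⟪γ t₀, γ t₀⟫_ℝ = 1 := by
    rw [real_inner_self_eq_norm_sq, h1]; norm_num
  have hb0 : ⟪deriv γ t₀, deriv γ t₀⟫_ℝ = 1 := by
    rw [real_inner_self_eq_norm_sq, h2]; norm_num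
  have hc0 : ⟪γ t₀, deriv γ t₀⟫_ℝ = 0 := h3
  have hd0 : ⟪deriv γ t₀, Complex.I • γ t₀⟫_ℝ = 0 := h4
  have key := legendre_system_aux κ (fun s => ⟪γ s, γ s⟫_ℝ) (fun s => ⟪deriv γ s, deriv γ s⟫_ℝ)
    (fun s => ⟪γ s, deriv γ s⟫_ℝ) (fun s => ⟪deriv γ s, Complex.I • γ s⟫_ℝ)
    ha hb hc hd t₀ ha0 hb0 hc0 hd0
  intro t
  obtain ⟨k1, k2, k3, k4⟩ := key t
  rw [real_inner_self_eq_norm_sq] at k1 k2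
  refine ⟨?_, ?_, k3, k4⟩
  · nlinarith [norm_nonneg (γ t), sq_nonneg (‖γ t‖ - 1), sq_nonneg (‖γ t‖ + 1)]
  · nlinarith [norm_nonneg (deriv γ t), sq_nonneg (‖deriv γ t‖ - 1), sq_nonneg (‖deriv γ t‖ + 1)]
end

section
/- Let γ : ℝ → ℍ² be a unit-speed Legendre curve in S⁷. Then at every t ∈ ℝ the eight vectors γ(t), i·γ(t), j·γ(t), k·γ(t), γ'(t), i·γ'(t), j·γ'(t), k·γ'(t) form an orthonormal set in ℍ² ≅ ℝ⁸. -/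
open scoped InnerProductSpace Quaternion

/-- `ℍ²` with the real inner product `⟨x, y⟩ = Re (conj x₁ * y₁) + Re (conj x₂ * y₂)`,
making it isometric to Euclidean `ℝ⁸`. -/
abbrev H2 := PiLp 2 (fun _ : Fin 2 => ℍ[ℝ])

/-- The quaternion imaginary unit `i`. -/
def qi : ℍ[ℝ] := ⟨0, 1, 0, 0⟩
/-- The quaternion imaginary unit `j`. -/
def qj : ℍ[ℝ] := ⟨0, 0, 1, 0⟩
/-- The quaternion imaginary unit `k`. -/
def qk : ℍ[ℝ] := ⟨0, 0, 0, 1⟩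

/-- Componentwise left multiplication of a vector of `ℍ²` by a quaternion. -/
noncomputable def qmul (q : ℍ[ℝ]) (x : H2) : H2 := WithLp.toLp 2 (fun n => q * x n)

lemma re_mul_comm (u v : ℍ[ℝ]) : (u * v).re = (v * u).re := by
  rw [Quaternion.re_mul, Quaternion.re_mul]; ring

lemma qmul_one (x : H2) : qmul 1 x = x := WithLp.ofLp_injective 2 <| funext fun n => one_mul _

lemma qmul_neg (q : ℍ[ℝ]) (x : H2) : qmul (-q) x = -qmul q x :=
  WithLp.ofLp_injective 2 <| funext fun n => neg_mul _ _

lemma qmul_qmul (q q' : ℍ[ℝ]) (x : H2) : qmul q (qmul q' x) = qmul (q * q') x :=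
  WithLp.ofLp_injective 2 <| funext fun n => (mul_assoc _ _ _).symm

lemma inner_qmul_left (q : ℍ[ℝ]) (x y : H2) :
    ⟪qmul q x, y⟫_ℝ = ⟪x, qmul (star q) y⟫_ℝ := by
  simp only [PiLp.inner_apply, qmul, Quaternion.inner_def]
  refine Finset.sum_congr rfl fun n _ => ?_
  calc (q * x n * star (y n)).re
      = ((x n * star (y n)) * q).re := by rw [mul_assoc]; exact re_mul_comm _ _
    _ = (x n * star (star q * y n)).re := by rw [star_mul, star_star, mul_assoc]

lemma inner_self_qmul (q : ℍ[ℝ]) (hq : q.re = 0) (x : H2) :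
    ⟪x, qmul q x⟫_ℝ = 0 := by
  simp only [PiLp.inner_apply, qmul, Quaternion.inner_def]
  have h : ∀ a : ℍ[ℝ], (a * star (q * a)).re = 0 := fun a => by
    rw [star_mul, ← mul_assoc, Quaternion.self_mul_star]
    simp [Quaternion.re_mul, hq]
  exact Finset.sum_eq_zero fun n _ => h (x n)

lemma qi_re : qi.re = 0 := rfl
lemma qi_imI : qi.imI = 1 := rfl
lemma qi_imJ : qi.imJ = 0 := rfl
lemma qi_imK : qi.imK = 0 := rfl
lemma qj_re : qj.re = 0 := rfl
lemma qj_imI : qj.imI = 0 := rfl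
lemma qj_imJ : qj.imJ = 1 := rfl
lemma qj_imK : qj.imK = 0 := rfl
lemma qk_re : qk.re = 0 := rfl
lemma qk_imI : qk.imI = 0 := rfl
lemma qk_imJ : qk.imJ = 0 := rfl
lemma qk_imK : qk.imK = 1 := rfl
lemma star_qi : star qi = -qi := by ext <;> simp [Quaternion.re_mul, Quaternion.imI_mul, Quaternion.imJ_mul, Quaternion.imK_mul, qi_re, qi_imI, qi_imJ, qi_imK]
lemma star_qj : star qj = -qj := by ext <;> simp [Quaternion.re_mul, Quaternion.imI_mul, Quaternion.imJ_mul, Quaternion.imK_mul, qj_re, qj_imI, qj_imJ, qj_imK]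
lemma star_qk : star qk = -qk := by ext <;> simp [Quaternion.re_mul, Quaternion.imI_mul, Quaternion.imJ_mul, Quaternion.imK_mul, qk_re, qk_imI, qk_imJ, qk_imK]
lemma qii : qi * qi = -1 := by ext <;> simp [Quaternion.re_mul, Quaternion.imI_mul, Quaternion.imJ_mul, Quaternion.imK_mul, qi_re, qi_imI, qi_imJ, qi_imK]
lemma qjj : qj * qj = -1 := by ext <;> simp [Quaternion.re_mul, Quaternion.imI_mul, Quaternion.imJ_mul, Quaternion.imK_mul, qj_re, qj_imI, qj_imJ, qj_imK]
lemma qkk : qk * qk = -1 := by ext <;> simp [Quaternion.re_mul, Quaternion.imI_mul, Quaternion.imJ_mul, Quaternion.imK_mul, qk_re, qk_imI, qk_imJ, qk_imK]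
lemma qij : qi * qj = qk := by ext <;> simp [Quaternion.re_mul, Quaternion.imI_mul, Quaternion.imJ_mul, Quaternion.imK_mul, qi_re, qi_imI, qi_imJ, qi_imK, qj_re, qj_imI, qj_imJ, qj_imK, qk_re, qk_imI, qk_imJ, qk_imK]
lemma qji : qj * qi = -qk := by ext <;> simp [Quaternion.re_mul, Quaternion.imI_mul, Quaternion.imJ_mul, Quaternion.imK_mul, qi_re, qi_imI, qi_imJ, qi_imK, qj_re, qj_imI, qj_imJ, qj_imK, qk_re, qk_imI, qk_imJ, qk_imK]
lemma qik : qi * qk = -qj := by ext <;> simp [Quaternion.re_mul, Quaternion.imI_mul, Quaternion.imJ_mul, Quaternion.imK_mul, qi_re, qi_imI, qi_imJ, qi_imK, qj_re, qj_imI, qj_imJ, qj_imK, qk_re, qk_imI, qk_imJ, qk_imK]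
lemma qki : qk * qi = qj := by ext <;> simp [Quaternion.re_mul, Quaternion.imI_mul, Quaternion.imJ_mul, Quaternion.imK_mul, qi_re, qi_imI, qi_imJ, qi_imK, qj_re, qj_imI, qj_imJ, qj_imK, qk_re, qk_imI, qk_imJ, qk_imK]
lemma qjk : qj * qk = qi := by ext <;> simp [Quaternion.re_mul, Quaternion.imI_mul, Quaternion.imJ_mul, Quaternion.imK_mul, qi_re, qi_imI, qi_imJ, qi_imK, qj_re, qj_imI, qj_imJ, qj_imK, qk_re, qk_imI, qk_imJ, qk_imK]
lemma qkj : qk * qj = -qi := by ext <;> simp [Quaternion.re_mul, Quaternion.imI_mul, Quaternion.imJ_mul, Quaternion.imK_mul, qi_re, qi_imI, qi_imJ, qi_imK, qj_re, qj_imI, qj_imJ, qj_imK, qk_re, qk_imI, qk_imJ, qk_imK]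


/-- For a unit-speed Legendre curve `γ` in `S⁷ ⊂ ℍ²`, at every `t`
the eight vectors `γ t`, `i•γ t`, `j•γ t`, `k•γ t`, `γ' t`, `i•γ' t`, `j•γ' t`,
`k•γ' t` form an orthonormal set in `ℍ² ≅ ℝ⁸`. -/
theorem stmt_3 (γ : ℝ → H2) (hγ : ContDiff ℝ (⊤ : ℕ∞) γ)
    (hunit : ∀ t, ‖γ t‖ = 1) (hspeed : ∀ t, ‖deriv γ t‖ = 1)
    (hlegi : ∀ t, ⟪deriv γ t, qmul qi (γ t)⟫_ℝ = 0)
    (hlegj : ∀ t, ⟪deriv γ t, qmul qj (γ t)⟫_ℝ = 0)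
    (hlegk : ∀ t, ⟪deriv γ t, qmul qk (γ t)⟫_ℝ = 0) (t : ℝ) :
    Orthonormal ℝ
      ![γ t, qmul qi (γ t), qmul qj (γ t), qmul qk (γ t),
        deriv γ t, qmul qi (deriv γ t), qmul qj (deriv γ t), qmul qk (deriv γ t)] := by
  have hd : ∀ s, HasDerivAt γ (deriv γ s) s := fun s =>
    ((hγ.differentiable (by simp)) s).hasDerivAt
  set x := γ t with hxdef
  set v := deriv γ t with hvdef
  have hxx : ⟪x, x⟫_ℝ = 1 := by
    rw [real_inner_self_eq_norm_mul_norm, hunit t]; norm_num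
  have hvv : ⟪v, v⟫_ℝ = 1 := by
    rw [real_inner_self_eq_norm_mul_norm, hspeed t]; norm_num
  have hxv : ⟪x, v⟫_ℝ = 0 := by
    have h0 : HasDerivAt (fun s => ⟪γ s, γ s⟫_ℝ) (⟪γ t, deriv γ t⟫_ℝ + ⟪deriv γ t, γ t⟫_ℝ) t :=
      (hd t).inner ℝ (hd t)
    have hc : (fun s => ⟪γ s, γ s⟫_ℝ) = fun _ => (1 : ℝ) := funext fun s => by
      rw [real_inner_self_eq_norm_mul_norm, hunit s]; norm_num
    rw [hc] at h0
    have := h0.unique (hasDerivAt_const t 1)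
    rw [real_inner_comm (deriv γ t) (γ t)] at this
    have h2 : ⟪v, x⟫_ℝ = 0 := by linarith
    rw [real_inner_comm]; exact h2
  have hvx : ⟪v, x⟫_ℝ = 0 := by rw [real_inner_comm]; exact hxv
  have hxqi : ⟪x, qmul qi x⟫_ℝ = 0 := inner_self_qmul qi rfl x
  have hxqj : ⟪x, qmul qj x⟫_ℝ = 0 := inner_self_qmul qj rfl x
  have hxqk : ⟪x, qmul qk x⟫_ℝ = 0 := inner_self_qmul qk rfl x
  have hvqi : ⟪v, qmul qi v⟫_ℝ = 0 := inner_self_qmul qi rfl v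
  have hvqj : ⟪v, qmul qj v⟫_ℝ = 0 := inner_self_qmul qj rfl v
  have hvqk : ⟪v, qmul qk v⟫_ℝ = 0 := inner_self_qmul qk rfl v
  have hvix : ⟪v, qmul qi x⟫_ℝ = 0 := hlegi t
  have hvjx : ⟪v, qmul qj x⟫_ℝ = 0 := hlegj t
  have hvkx : ⟪v, qmul qk x⟫_ℝ = 0 := hlegk t
  have hxiv : ⟪x, qmul qi v⟫_ℝ = 0 := by
    rw [real_inner_comm, inner_qmul_left, star_qi, qmul_neg, inner_neg_right, hvix, neg_zero]
  have hxjv : ⟪x, qmul qj v⟫_ℝ = 0 := by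
    rw [real_inner_comm, inner_qmul_left, star_qj, qmul_neg, inner_neg_right, hvjx, neg_zero]
  have hxkv : ⟪x, qmul qk v⟫_ℝ = 0 := by
    rw [real_inner_comm, inner_qmul_left, star_qk, qmul_neg, inner_neg_right, hvkx, neg_zero]
  rw [orthonormal_iff_ite]
  intro i j
  have e0 : (![x, qmul qi x, qmul qj x, qmul qk x, v, qmul qi v, qmul qj v, qmul qk v]) 0 = x := rfl
  have e1 : (![x, qmul qi x, qmul qj x, qmul qk x, v, qmul qi v, qmul qj v, qmul qk v]) 1 = qmul qi x := rfl
  have e2 : (![x, qmul qi x, qmul qj x, qmul qk x, v, qmul qi v, qmul qj v, qmul qk v]) 2 = qmul qj x := rfl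
  have e3 : (![x, qmul qi x, qmul qj x, qmul qk x, v, qmul qi v, qmul qj v, qmul qk v]) 3 = qmul qk x := rfl
  have e4 : (![x, qmul qi x, qmul qj x, qmul qk x, v, qmul qi v, qmul qj v, qmul qk v]) 4 = v := rfl
  have e5 : (![x, qmul qi x, qmul qj x, qmul qk x, v, qmul qi v, qmul qj v, qmul qk v]) 5 = qmul qi v := rfl
  have e6 : (![x, qmul qi x, qmul qj x, qmul qk x, v, qmul qi v, qmul qj v, qmul qk v]) 6 = qmul qj v := rfl
  have e7 : (![x, qmul qi x, qmul qj x, qmul qk x, v, qmul qi v, qmul qj v, qmul qk v]) 7 = qmul qk v := rfl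
  fin_cases i <;> fin_cases j <;>
    simp [-PiLp.inner_apply, -inner_self_eq_norm_sq_to_K, e0, e1, e2, e3, e4, e5, e6, e7, inner_qmul_left, qmul_qmul, star_qi, star_qj, star_qk, qmul_neg, qmul_one,
      qii, qjj, qkk, qij, qji, qik, qki, qjk, qkj, inner_neg_right,
      hxx, hvv, hxv, hvx, hxqi, hxqj, hxqk, hvqi, hvqj, hvqk,
      hvix, hvjx, hvkx, hxiv, hxjv, hxkv]
end

section
/- Let κ, K : ℝ → ℝ be differentiable with K'(v) = κ(v), and let f : ℝ → ℍ be a differentiable curve satisfying f'(v) = j·(cos K(v) + sin K(v)·i)·f(v) for all v (quaternion multiplication). Then f is twice differentiable and satisfies the Legendre equation f''(v) = −f(v) − κ(v)·i·f'(v) for all v. -/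
open scoped Quaternion

lemma hasDerivAt_coeQ {u : ℝ → ℝ} {u' x : ℝ} (h : HasDerivAt u u' x) :
    HasDerivAt (fun v => ((u v : ℝ) : ℍ[ℝ])) ((u' : ℝ) : ℍ[ℝ]) x := by
  have e : ∀ r : ℝ, ((r : ℝ) : ℍ[ℝ]) = r • (1 : ℍ[ℝ]) := fun r => by
    rw [← Quaternion.algebraMap_def, Algebra.algebraMap_eq_smul_one]
  simp only [e]
  exact h.smul_const (1 : ℍ[ℝ])

lemma key (c s k : ℝ) (h : c^2 + s^2 = 1) (x : ℍ[ℝ]) :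
    qj * (((-(s*k) : ℝ) : ℍ[ℝ]) + ((c*k : ℝ) : ℍ[ℝ]) * qi) * x
      + (qj * ((c : ℝ) + ((s : ℝ) : ℍ[ℝ]) * qi)) * ((qj * ((c : ℝ) + ((s : ℝ) : ℍ[ℝ]) * qi)) * x)
    = -x - k • (qi * ((qj * ((c : ℝ) + ((s : ℝ) : ℍ[ℝ]) * qi)) * x)) := by
  ext <;>
  simp [Quaternion.ext_iff, Quaternion.re_mul, Quaternion.imI_mul,
    Quaternion.imJ_mul, Quaternion.imK_mul] <;>
  simp [qi, qj]
  · linear_combination (-x.re) * h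
  · linear_combination (-x.imI) * h
  · linear_combination (-x.imJ) * h
  · linear_combination (-x.imK) * h

/-- Let `κ, K : ℝ → ℝ` be differentiable with `K' = κ`, and let
`f : ℝ → ℍ` be a differentiable curve satisfying
`f' v = j * (cos (K v) + sin (K v) * i) * f v` for all `v` (quaternion products).
Then `f` is twice differentiable and satisfies the Legendre equation
`f'' v = -f v - κ v • (i * f' v)` for all `v`. -/
theorem stmt_9 (κ K : ℝ → ℝ) (hκ : Differentiable ℝ κ) (hK : Differentiable ℝ K)
    (hK' : ∀ v, deriv K v = κ v)
    (f : ℝ → ℍ[ℝ]) (hf : Differentiable ℝ f)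
    (hf' : ∀ v, deriv f v =
      qj * ((Real.cos (K v) : ℍ[ℝ]) + (Real.sin (K v) : ℍ[ℝ]) * qi) * f v) :
    Differentiable ℝ (deriv f) ∧
    ∀ v, deriv (deriv f) v = -f v - κ v • (qi * deriv f v) := by
  have hg : ∀ v, HasDerivAt
      (fun v => qj * ((Real.cos (K v) : ℍ[ℝ]) + (Real.sin (K v) : ℍ[ℝ]) * qi))
      (qj * (((-(Real.sin (K v) * κ v) : ℝ) : ℍ[ℝ]) +
        ((Real.cos (K v) * κ v : ℝ) : ℍ[ℝ]) * qi)) v := by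
    intro v
    have hc' : HasDerivAt (fun v => Real.cos (K v)) (-(Real.sin (K v) * κ v)) v := by
      simpa [hK', neg_mul] using ((hK v).hasDerivAt).cos
    have hs' : HasDerivAt (fun v => Real.sin (K v)) (Real.cos (K v) * κ v) v := by
      simpa [hK'] using ((hK v).hasDerivAt).sin
    exact ((hasDerivAt_coeQ hc').add ((hasDerivAt_coeQ hs').mul_const qi)).const_mul qj
  have hfd : deriv f = fun v =>
      qj * ((Real.cos (K v) : ℍ[ℝ]) + (Real.sin (K v) : ℍ[ℝ]) * qi) * f v := funext hf'
  have hmul : ∀ v, HasDerivAt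
      (fun v => qj * ((Real.cos (K v) : ℍ[ℝ]) + (Real.sin (K v) : ℍ[ℝ]) * qi) * f v)
      (qj * (((-(Real.sin (K v) * κ v) : ℝ) : ℍ[ℝ]) +
        ((Real.cos (K v) * κ v : ℝ) : ℍ[ℝ]) * qi) * f v +
       qj * ((Real.cos (K v) : ℍ[ℝ]) + (Real.sin (K v) : ℍ[ℝ]) * qi) * deriv f v) v :=
    fun v => (hg v).mul (hf v).hasDerivAt
  constructor
  · rw [hfd]
    exact fun v => ((hmul v).differentiableAt)
  · intro v
    rw [hfd, (hmul v).deriv, hf' v]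
    exact key (Real.cos (K v)) (Real.sin (K v)) (κ v) (Real.cos_sq_add_sin_sq (K v)) (f v)
end

section
/- Let κ : ℝ → ℝ be continuous and let γ : ℝ → ℍ² be a C² curve satisfying γ''(t) = −γ(t) + κ(t)·(j·γ'(t)) for all t. Then for all t ∈ ℝ, both γ(t) and γ'(t) lie in the real linear span of the four vectors γ(0), γ'(0), j·γ(0), j·γ'(0). (Hence a Legendre curve in S⁷ whose curvatures κ₁ and κ₃ vanish lies in a totally geodesic S³ ⊂ S⁷, namely the unit sphere of a j-complex plane of ℍ².) -/
open scoped Quaternion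

noncomputable def Jmap : H2 →L[ℝ] H2 :=
  LinearMap.toContinuousLinearMap
    { toFun := qmul qj
      map_add' := by intro x y; refine PiLp.ext fun n => ?_; simp [qmul, mul_add]
      map_smul' := by intro r x; refine PiLp.ext fun n => ?_; simp [qmul] }

lemma Jmap_apply (x : H2) : Jmap x = qmul qj x := rfl

lemma quat_skew (a b : ℍ[ℝ]) : (inner ℝ (qj * a) b : ℝ) = -inner ℝ a (qj * b) := by
  simp only [Quaternion.inner_def, Quaternion.re_mul, Quaternion.imI_mul,
    Quaternion.imJ_mul, Quaternion.imK_mul, Quaternion.re_star, Quaternion.imI_star,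
    Quaternion.imJ_star, Quaternion.imK_star]
  dsimp only [qj]
  ring

lemma J_skew (x y : H2) : (inner ℝ (Jmap x) y : ℝ) = -inner ℝ x (Jmap y) := by
  simp only [Jmap_apply, PiLp.inner_apply, qmul]
  rw [← Finset.sum_neg_distrib]
  exact Finset.sum_congr rfl fun i _ => quat_skew _ _

lemma J_sq (x : H2) : Jmap (Jmap x) = -x := by
  refine PiLp.ext fun n => ?_
  show qj * (qj * x n) = -(x n)
  rw [← mul_assoc]
  have h : qj * qj = -1 := by
    simp only [Quaternion.ext_iff, Quaternion.re_mul, Quaternion.imI_mul,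
      Quaternion.imJ_mul, Quaternion.imK_mul]
    simp [qj]
  rw [h, neg_one_mul]

/-- Let `κ : ℝ → ℝ` be continuous and let `γ : ℝ → ℍ²` be a `C²`
curve satisfying `γ'' t = -γ t + κ t • (j • γ' t)` for all `t`.  Then for all `t`,
both `γ t` and `γ' t` lie in the real linear span of the four vectors
`γ 0`, `γ' 0`, `j • γ 0`, `j • γ' 0`.  (Hence a Legendre curve in `S⁷` whose
curvatures `κ₁` and `κ₃` vanish lies in a totally geodesic `S³ ⊂ S⁷`.) -/
theorem stmt_16 (κ : ℝ → ℝ) (hκ : Continuous κ) (γ : ℝ → H2) (hγ : ContDiff ℝ 2 γ)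
    (hode : ∀ t, deriv (deriv γ) t = -γ t + κ t • qmul qj (deriv γ t)) (t : ℝ) :
    γ t ∈ Submodule.span ℝ
      ({γ 0, deriv γ 0, qmul qj (γ 0), qmul qj (deriv γ 0)} : Set H2) ∧
    deriv γ t ∈ Submodule.span ℝ
      ({γ 0, deriv γ 0, qmul qj (γ 0), qmul qj (deriv γ 0)} : Set H2) := by
  set T : Set H2 := {γ 0, deriv γ 0, qmul qj (γ 0), qmul qj (deriv γ 0)} with hT
  set S : Submodule ℝ H2 := Submodule.span ℝ T with hS
  haveI : FiniteDimensional ℝ S := FiniteDimensional.span_of_finite ℝ (Set.toFinite T)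
  have hg0 : γ 0 ∈ S := Submodule.subset_span (by simp [hT])
  have hg1 : deriv γ 0 ∈ S := Submodule.subset_span (by simp [hT])
  have hg2 : qmul qj (γ 0) ∈ S := Submodule.subset_span (by simp [hT])
  have hg3 : qmul qj (deriv γ 0) ∈ S := Submodule.subset_span (by simp [hT])
  -- J preserves S
  have hJS : ∀ x ∈ S, Jmap x ∈ S := by
    intro x hx
    induction hx using Submodule.span_induction with
    | mem y hy =>
      rcases hy with rfl | rfl | rfl | rfl
      · exact hg2
      · exact hg3
      · rw [← Jmap_apply, J_sq]; exact S.neg_mem hg0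
      · rw [← Jmap_apply, J_sq]; exact S.neg_mem hg1
    | zero => simp
    | add y z _ _ hy hz => rw [map_add]; exact S.add_mem hy hz
    | smul c y _ hy => rw [map_smul]; exact S.smul_mem c hy
  -- orthogonal projection
  set P : H2 →L[ℝ] H2 := S.subtypeL.comp (S.orthogonalProjectionOnto) with hP
  have hPmem : ∀ x, P x ∈ S := fun x => Submodule.coe_mem _
  have hPid : ∀ x ∈ S, P x = x := fun x hx => Submodule.starProjection_eq_self_iff.mpr hx
  have hPperp : ∀ x ∈ Sᗮ, P x = 0 := by
    intro x hx
    show (↑(S.orthogonalProjectionOnto x) : H2) = 0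
    rw [Submodule.orthogonalProjectionOnto_apply_of_mem_orthogonal hx]
    rfl
  have hJperp : ∀ x ∈ Sᗮ, Jmap x ∈ Sᗮ := by
    intro x hx
    rw [Submodule.mem_orthogonal]
    intro u hu
    have h1 : (inner ℝ (Jmap u) x : ℝ) = 0 := (Submodule.mem_orthogonal S x).mp hx _ (hJS u hu)
    have := J_skew u x
    linarith
  have hPJ : ∀ x, P (Jmap x) = Jmap (P x) := by
    intro x
    have hdec : Jmap x = Jmap (P x) + Jmap (x - P x) := by rw [← map_add]; congr 1; abel
    have hsub : x - P x ∈ Sᗮ := Submodule.sub_starProjection_mem_orthogonal x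
    rw [hdec, map_add, hPid _ (hJS _ (hPmem x)), hPperp _ (hJperp _ hsub), add_zero]
  -- differentiability
  have hdγ : Differentiable ℝ γ := hγ.differentiable (by norm_num)
  have h11 : ContDiff ℝ ((1 : ℕ) + 1) γ := by
    convert hγ using 2 <;> norm_num
  have hdγ' : Differentiable ℝ (deriv γ) :=
    ((contDiff_succ_iff_deriv.mp h11).2.2).differentiable (by norm_num)
  have hd1 : ∀ s, HasDerivAt γ (deriv γ s) s := fun s => (hdγ s).hasDerivAt
  have hd2 : ∀ s, HasDerivAt (deriv γ) (deriv (deriv γ) s) s := fun s => (hdγ' s).hasDerivAt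
  set z : ℝ → H2 := fun s => γ s - P (γ s) with hz
  set w : ℝ → H2 := fun s => deriv γ s - P (deriv γ s) with hw
  have hzd : ∀ s, HasDerivAt z (w s) s := fun s =>
    (hd1 s).sub ((P.hasFDerivAt).comp_hasDerivAt s (hd1 s))
  have hwd : ∀ s, HasDerivAt w (-(z s) + κ s • Jmap (w s)) s := by
    intro s
    have h := (hd2 s).sub ((P.hasFDerivAt).comp_hasDerivAt s (hd2 s))
    have heq : deriv (deriv γ) s - P (deriv (deriv γ) s) = -(z s) + κ s • Jmap (w s) := by
      rw [hode s, ← Jmap_apply]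
      simp only [map_add, map_neg, map_smul, hPJ, hz, hw, map_sub]
      module
    rw [heq] at h
    exact h
  -- energy
  set f : ℝ → ℝ := fun s => (inner ℝ (z s) (z s) : ℝ) + inner ℝ (w s) (w s) with hf
  have hfd : ∀ s, HasDerivAt f 0 s := by
    intro s
    have h1 := HasDerivAt.inner ℝ (hzd s) (hzd s)
    have h2 := HasDerivAt.inner ℝ (hwd s) (hwd s)
    have h := h1.add h2
    have hskew : (inner ℝ (w s) (Jmap (w s)) : ℝ) = 0 := by
      have h3 := J_skew (w s) (w s)
      have h4 := real_inner_comm (w s) (Jmap (w s))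
      linarith
    have hskew2 : (inner ℝ (Jmap (w s)) (w s) : ℝ) = 0 := by
      rw [real_inner_comm]; exact hskew
    have hval : (inner ℝ (z s) (w s) : ℝ) + inner ℝ (w s) (z s) +
        ((inner ℝ (w s) (-(z s) + κ s • Jmap (w s)) : ℝ) +
          inner ℝ (-(z s) + κ s • Jmap (w s)) (w s)) = 0 := by
      simp only [inner_add_left, inner_add_right, inner_neg_left, inner_neg_right,
        real_inner_smul_left, real_inner_smul_right, hskew, hskew2]
      rw [real_inner_comm (z s) (w s)]
      ring
    rw [← hval]
    exact h
  have hdiff : Differentiable ℝ f := fun x => (hfd x).differentiableAt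
  have hconst := is_const_of_deriv_eq_zero hdiff (fun x => (hfd x).deriv)
  have hf0 : f 0 = 0 := by
    simp [hf, hz, hw, hPid _ hg0, hPid _ hg1]
  have hft : f t = 0 := (hconst t 0).trans hf0
  have hzz : (inner ℝ (z t) (z t) : ℝ) = 0 := by
    have := real_inner_self_nonneg (x := z t)
    have := real_inner_self_nonneg (x := w t)
    simp only [hf] at hft
    linarith
  have hww : (inner ℝ (w t) (w t) : ℝ) = 0 := by
    have := real_inner_self_nonneg (x := z t)
    simp only [hf] at hft
    linarith
  have hz0 : z t = 0 := inner_self_eq_zero.mp hzz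
  have hw0 : w t = 0 := inner_self_eq_zero.mp hww
  constructor
  · have : γ t = P (γ t) := by
      have := sub_eq_zero.mp hz0
      exact this
    rw [this]; exact hPmem _
  · have : deriv γ t = P (deriv γ t) := sub_eq_zero.mp hw0
    rw [this]; exact hPmem _
end
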